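/- arXiv:1707.09278 — 3 statements merged into one kernel-verified Lean document; each statement's English description precedes it below -/
import Mathlib

section
/- Let q ∈ [0,2] ∪ [3,∞) with q ≠ 1, λ ∈ [0,1], ε ∈ [0, π/2], and θ ∈ ℝ. Set μ_X(θ) = λ sin²θ + (1-λ)cos²θ and μ_Y(θ) = λ sin²(θ+ε) + (1-λ)cos²(θ+ε). Then t_q(μ_X(θ)) + t_q(μ_Y(θ)) - 2 t_q(λ) ≥ ((λ^q + (1-λ)^q - 2^{1-q})/(λ^q + (1-λ)^q + q - 2)) · (1 - t_q(λ)) · (sin²(2θ + 2ε) + sin²(2θ)). -/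
open Real

/-- Tsallis point entropy `t_q(x) = (1 - x^q - (1-x)^q)/(q-1)` (real powers). -/
noncomputable def tq (q x : ℝ) : ℝ := (1 - x ^ q - (1 - x) ^ q) / (q - 1)

/-!
With `g(t) = (1/2 + t)^q + (1/2 - t)^q`, `a = 1/2 - λ` and `c = cos 2θ` one has
`μ_X(θ) = 1/2 + a c`, `t_q(μ_X(θ)) = (1 - g(a c))/(q - 1)` and `sin² 2θ = 1 - c²`, so the bound for
a single angle is `G(a c) ≤ c² G(a)` for `G(t) = (q - 1)(g(t) - g(0))`. This holds because `G(t)/t²`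
increases on `(0, 1/2]`: its derivative has the sign of `t G'(t) - 2 G(t)`, which vanishes at `0`
and has derivative `(q - 1)(t g''(t) - g'(t))`. Substituting `r = (1/2 + t)/(1/2 - t) ≥ 1` turns the
sign of the latter into that of a function of `r` vanishing at `r = 1`, with derivative
`(q - 1)² (1 + (q - 3) r^(q-2) - (q - 2) r^(q-3))`; this again vanishes at `r = 1` and increases
on `r ≥ 1` because `(q - 2)(q - 3) ≥ 0`. Adding the bounds for `θ` and `θ + ε` gives the theorem,
since `1 - t_q(λ) = (λ^q + (1-λ)^q + q - 2)/(q - 1)` and `G(a) ≥ 0` by convexity or concavity of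
`x ↦ x^q`.
-/

open Set

lemma monotoneOn_of_hasDerivAt_nonneg {D : Set ℝ} (hD : Convex ℝ D) {f f' : ℝ → ℝ}
    (hf : ∀ x ∈ D, HasDerivAt f (f' x) x) (hf₀ : ∀ x ∈ interior D, 0 ≤ f' x) :
    MonotoneOn f D :=
  monotoneOn_of_hasDerivWithinAt_nonneg hD
    (fun x hx ↦ (hf x hx).continuousAt.continuousWithinAt)
    (fun x hx ↦ (hf x (interior_subset hx)).hasDerivWithinAt) hf₀

lemma one_add_mul_rpow_sub_mul_rpow_nonneg {q r : ℝ} (hq23 : 0 ≤ (q - 2) * (q - 3)) (hr : 1 ≤ r) :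
    0 ≤ 1 + (q - 3) * r ^ (q - 2) - (q - 2) * r ^ (q - 3) := by
  have hderiv : ∀ x ∈ Ici (1 : ℝ),
      HasDerivAt (fun x ↦ 1 + (q - 3) * x ^ (q - 2) - (q - 2) * x ^ (q - 3))
        ((q - 2) * (q - 3) * (x ^ (q - 3) - x ^ (q - 4))) x := fun x hx ↦ by
    have hpow (p : ℝ) := hasDerivAt_rpow_const (p := p) (Or.inl (zero_lt_one.trans_le hx).ne')
    refine ((((hpow _).const_mul (q - 3)).const_add 1).sub
      ((hpow _).const_mul (q - 2))).congr_deriv ?_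
    rw [show q - 2 - 1 = q - 3 by ring, show q - 3 - 1 = q - 4 by ring]
    ring
  have hmono := monotoneOn_of_hasDerivAt_nonneg (convex_Ici 1) hderiv fun x hx ↦ by
    rw [interior_Ici] at hx
    have : x ^ (q - 4) ≤ x ^ (q - 3) := rpow_le_rpow_of_exponent_le hx.le (by linarith)
    exact mul_nonneg hq23 (sub_nonneg.2 this)
  have := hmono self_mem_Ici hr hr
  simp only [one_rpow] at this
  linarith

lemma mul_sub_mul_rpow_sub_nonneg {q r : ℝ} (hq23 : 0 ≤ (q - 2) * (q - 3)) (hr : 1 ≤ r) :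
    0 ≤ (q - 1) * ((q - 1) * (r - 1) * (r ^ (q - 2) + 1) - 2 * (r ^ (q - 1) - 1)) := by
  have hderiv : ∀ x ∈ Ici (1 : ℝ), HasDerivAt
      (fun x ↦ (q - 1) * ((q - 1) * (x - 1) * (x ^ (q - 2) + 1) - 2 * (x ^ (q - 1) - 1)))
      ((q - 1) ^ 2 * (1 + (q - 3) * x ^ (q - 2) - (q - 2) * x ^ (q - 3))) x := fun x hx ↦ by
    have hx : 0 < x := zero_lt_one.trans_le hx
    have hpow (p : ℝ) := hasDerivAt_rpow_const (p := p) (Or.inl hx.ne')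
    refine (((((hasDerivAt_id' x).sub_const 1).const_mul (q - 1)).mul ((hpow _).add_const 1)).sub
      (((hpow _).sub_const 1).const_mul 2)).const_mul (q - 1) |>.congr_deriv ?_
    have hsplit : x ^ (q - 2) = x ^ (q - 3) * x := by
      rw [← rpow_add_one hx.ne']; ring_nf
    rw [show q - 2 - 1 = q - 3 by ring, show q - 1 - 1 = q - 2 by ring, hsplit]
    ring
  have hmono := monotoneOn_of_hasDerivAt_nonneg (convex_Ici 1) hderiv fun x hx ↦ by
    rw [interior_Ici] at hx
    exact mul_nonneg (sq_nonneg _) (one_add_mul_rpow_sub_mul_rpow_nonneg hq23 hx.le)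
  simpa using hmono self_mem_Ici hr hr

noncomputable def symPowSum (q t : ℝ) : ℝ := (1 / 2 + t) ^ q + (1 / 2 - t) ^ q

noncomputable def symPowSumDeriv (q t : ℝ) : ℝ :=
  q * ((1 / 2 + t) ^ (q - 1) - (1 / 2 - t) ^ (q - 1))

lemma symPowSum_neg (q t : ℝ) : symPowSum q (-t) = symPowSum q t := by
  rw [symPowSum, symPowSum, add_comm, sub_neg_eq_add, ← sub_eq_add_neg]

lemma symPowSum_abs (q t : ℝ) : symPowSum q |t| = symPowSum q t := by
  rcases abs_choice t with h | h <;> rw [h]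
  exact symPowSum_neg q t

lemma symPowSum_zero (q : ℝ) : symPowSum q 0 = 2 ^ (1 - q) := by
  rw [symPowSum, add_zero, sub_zero, ← two_mul, one_div, inv_rpow zero_le_two,
    rpow_sub zero_lt_two, rpow_one, div_eq_mul_inv]

lemma tq_eq_symPowSum (q x : ℝ) : tq q x = (1 - symPowSum q (x - 1 / 2)) / (q - 1) := by
  rw [tq, symPowSum, add_sub_cancel, sub_sub_eq_add_sub, add_halves, sub_sub]

lemma continuous_symPowSum {q : ℝ} (hq : 0 ≤ q) : Continuous (symPowSum q) :=
  ((continuous_const.add continuous_id).rpow_const fun _ ↦ Or.inr hq).add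
    ((continuous_const.sub continuous_id).rpow_const fun _ ↦ Or.inr hq)

lemma hasDerivAt_symPowSum (q : ℝ) {t : ℝ} (ht : |t| < 1 / 2) :
    HasDerivAt (symPowSum q) (symPowSumDeriv q t) t := by
  obtain ⟨h₁, h₂⟩ := abs_lt.1 ht
  have hA := ((hasDerivAt_id' t).const_add (1 / 2)).rpow_const (p := q) (Or.inl (by linarith))
  have hB := ((hasDerivAt_id' t).const_sub (1 / 2)).rpow_const (p := q) (Or.inl (by linarith))
  refine (hA.add hB).congr_deriv ?_
  rw [symPowSumDeriv]
  ring

lemma hasDerivAt_symPowSumDeriv (q : ℝ) {t : ℝ} (ht : |t| < 1 / 2) :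
    HasDerivAt (symPowSumDeriv q)
      (q * (q - 1) * ((1 / 2 + t) ^ (q - 2) + (1 / 2 - t) ^ (q - 2))) t := by
  obtain ⟨h₁, h₂⟩ := abs_lt.1 ht
  have hA := ((hasDerivAt_id' t).const_add (1 / 2)).rpow_const (p := q - 1) (Or.inl (by linarith))
  have hB := ((hasDerivAt_id' t).const_sub (1 / 2)).rpow_const (p := q - 1) (Or.inl (by linarith))
  refine ((hA.sub hB).const_mul q).congr_deriv ?_
  rw [show q - 1 - 1 = q - 2 by ring]
  ring

lemma symPowSum_second_deriv_mul_sub_nonneg {q t : ℝ} (hq : 0 ≤ q) (hq23 : 0 ≤ (q - 2) * (q - 3))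
    (ht₀ : 0 < t) (ht : t < 1 / 2) :
    0 ≤ (q - 1) * (t * (q * (q - 1) * ((1 / 2 + t) ^ (q - 2) + (1 / 2 - t) ^ (q - 2)))
      - symPowSumDeriv q t) := by
  rw [symPowSumDeriv]
  have hB : 0 < 1 / 2 - t := by linarith
  obtain ⟨r, hr, hA⟩ : ∃ r, 1 ≤ r ∧ 1 / 2 + t = (1 / 2 - t) * r :=
    ⟨(1 / 2 + t) / (1 / 2 - t), by rw [le_div_iff₀ hB]; linarith, (mul_div_cancel₀ _ hB.ne').symm⟩
  have ht' : t = (1 / 2 - t) * (r - 1) / 2 := by linarith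
  generalize 1 / 2 - t = B at hB hA ht' ⊢
  have hB' : B ^ (q - 1) = B ^ (q - 2) * B := by rw [← rpow_add_one hB.ne']; ring_nf
  have key : (q - 1) * (t * (q * (q - 1) * ((1 / 2 + t) ^ (q - 2) + B ^ (q - 2)))
      - q * ((1 / 2 + t) ^ (q - 1) - B ^ (q - 1)))
      = q / 2 * B ^ (q - 1)
        * ((q - 1) * ((q - 1) * (r - 1) * (r ^ (q - 2) + 1) - 2 * (r ^ (q - 1) - 1))) := by
    rw [hA, mul_rpow hB.le (by linarith), mul_rpow hB.le (by linarith), hB', ht']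
    ring
  rw [key]
  exact mul_nonneg (by positivity) (mul_sub_mul_rpow_sub_nonneg hq23 hr)

lemma mul_symPowSumDeriv_sub_nonneg {q t : ℝ} (hq : 0 ≤ q) (hq23 : 0 ≤ (q - 2) * (q - 3))
    (ht : t ∈ Ico 0 (1 / 2)) :
    0 ≤ (q - 1) * (t * symPowSumDeriv q t - 2 * (symPowSum q t - symPowSum q 0)) := by
  have hderiv : ∀ x ∈ Ico (0 : ℝ) (1 / 2), HasDerivAt
      (fun x ↦ (q - 1) * (x * symPowSumDeriv q x - 2 * (symPowSum q x - symPowSum q 0)))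
      ((q - 1) * (x * (q * (q - 1) * ((1 / 2 + x) ^ (q - 2) + (1 / 2 - x) ^ (q - 2)))
        - symPowSumDeriv q x)) x := fun x hx ↦ by
    have hx : |x| < 1 / 2 := abs_lt.2 ⟨by linarith [hx.1], hx.2⟩
    refine ((((hasDerivAt_id' x).mul (hasDerivAt_symPowSumDeriv q hx)).sub
      (((hasDerivAt_symPowSum q hx).sub_const _).const_mul 2)).const_mul (q - 1)).congr_deriv ?_
    ring
  have hmono := monotoneOn_of_hasDerivAt_nonneg (convex_Ico 0 (1 / 2)) hderiv fun x hx ↦ by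
    rw [interior_Ico] at hx
    exact symPowSum_second_deriv_mul_sub_nonneg hq hq23 hx.1 hx.2
  simpa using hmono (left_mem_Ico.2 one_half_pos) ht ht.1

lemma monotoneOn_symPowSum_sub_div_sq {q : ℝ} (hq : 0 ≤ q) (hq23 : 0 ≤ (q - 2) * (q - 3)) :
    MonotoneOn (fun t ↦ (q - 1) * (symPowSum q t - symPowSum q 0) / t ^ 2) (Ioc 0 (1 / 2)) := by
  refine monotoneOn_of_hasDerivWithinAt_nonneg (convex_Ioc 0 (1 / 2))
    (f' := fun t ↦ t * ((q - 1) * (t * symPowSumDeriv q t - 2 * (symPowSum q t - symPowSum q 0)))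
      / (t ^ 2) ^ 2) ?_ (fun t ht ↦ ?_) (fun t ht ↦ ?_)
  · exact (continuous_const.mul ((continuous_symPowSum hq).sub continuous_const)).continuousOn.div
      (continuous_pow 2).continuousOn fun t ht ↦ pow_ne_zero 2 ht.1.ne'
  · rw [interior_Ioc] at ht
    have ht' : |t| < 1 / 2 := abs_lt.2 ⟨by linarith [ht.1], ht.2⟩
    refine ((((hasDerivAt_symPowSum q ht').sub_const _).const_mul (q - 1)).div
      (hasDerivAt_pow 2 t) (pow_ne_zero 2 ht.1.ne')).hasDerivWithinAt.congr_deriv ?_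
    ring
  · rw [interior_Ioc] at ht
    exact div_nonneg (mul_nonneg ht.1.le (mul_symPowSumDeriv_sub_nonneg hq hq23 ⟨ht.1.le, ht.2⟩))
      (by positivity)

lemma mul_symPowSum_mul_sub_le {q s c : ℝ} (hq : 0 ≤ q) (hq23 : 0 ≤ (q - 2) * (q - 3))
    (hs : |s| ≤ 1 / 2) (hc : |c| ≤ 1) :
    (q - 1) * (symPowSum q (s * c) - symPowSum q 0)
      ≤ c ^ 2 * ((q - 1) * (symPowSum q s - symPowSum q 0)) := by
  rw [← symPowSum_abs q (s * c), ← symPowSum_abs q s, abs_mul, ← sq_abs c]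
  have hs₀ := abs_nonneg s
  have hc₀ := abs_nonneg c
  generalize |s| = s at *
  generalize |c| = c at *
  rcases hs₀.eq_or_lt with rfl | hs₀
  · simp
  rcases hc₀.eq_or_lt with rfl | hc₀
  · simp
  have hsc : s * c ≤ s := mul_le_of_le_one_right hs₀.le hc
  have h := monotoneOn_symPowSum_sub_div_sq hq hq23 ⟨mul_pos hs₀ hc₀, hsc.trans hs⟩ ⟨hs₀, hs⟩ hsc
  rw [div_le_div_iff₀ (by positivity) (by positivity)] at h
  refine le_of_mul_le_mul_right ?_ (pow_pos hs₀ 2)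
  linear_combination h

lemma mul_symPowSum_sub_zero_nonneg {q t : ℝ} (hq : 0 ≤ q) (ht : |t| ≤ 1 / 2) :
    0 ≤ (q - 1) * (symPowSum q t - symPowSum q 0) := by
  obtain ⟨h₁, h₂⟩ := abs_le.1 ht
  have hA : 1 / 2 + t ∈ Ici (0 : ℝ) := by rw [mem_Ici]; linarith
  have hB : 1 / 2 - t ∈ Ici (0 : ℝ) := by rw [mem_Ici]; linarith
  have hmid : (1 / 2 : ℝ) • (1 / 2 + t) + (1 / 2 : ℝ) • (1 / 2 - t) = 1 / 2 := by
    simp only [smul_eq_mul]; ring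
  have hzero : symPowSum q 0 = 2 * (1 / 2) ^ q := by rw [symPowSum, add_zero, sub_zero, two_mul]
  rcases le_total 1 q with h | h
  · have := (convexOn_rpow h).2 hA hB (by norm_num) (by norm_num) (add_halves 1)
    rw [hmid, smul_eq_mul, smul_eq_mul] at this
    rw [hzero, symPowSum]
    exact mul_nonneg (by linarith) (by linarith)
  · have := (concaveOn_rpow hq h).2 hA hB (by norm_num) (by norm_num) (add_halves 1)
    rw [hmid, smul_eq_mul, smul_eq_mul] at this
    rw [hzero, symPowSum]
    exact mul_nonneg_of_nonpos_of_nonpos (by linarith) (by linarith)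

lemma div_nonneg_of_mul_nonneg {α : Type*} [Field α] [LinearOrder α] [IsStrictOrderedRing α]
    {a b : α} (h : 0 ≤ b * a) : 0 ≤ a / b := by
  rcases eq_or_ne b 0 with rfl | hb
  · simp
  · rw [← mul_div_mul_left a b hb]
    exact div_nonneg h (mul_self_nonneg b)

lemma pow_add_one_sub_pow_eq_symPowSum (q lam : ℝ) :
    lam ^ q + (1 - lam) ^ q = symPowSum q (1 / 2 - lam) := by
  rw [symPowSum, add_comm, sub_sub_cancel, ← add_sub_assoc, add_halves]

lemma div_mul_sin_sq_le_tq_sub_tq {q lam : ℝ} (hq : 0 ≤ q) (hq23 : 0 ≤ (q - 2) * (q - 3))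
    (hlam : lam ∈ Icc 0 1) (θ : ℝ) :
    (lam ^ q + (1 - lam) ^ q - 2 ^ (1 - q)) / (q - 1) * sin (2 * θ) ^ 2
      ≤ tq q (lam * sin θ ^ 2 + (1 - lam) * cos θ ^ 2) - tq q lam := by
  have hμ : lam * sin θ ^ 2 + (1 - lam) * cos θ ^ 2 - 1 / 2 = (1 / 2 - lam) * cos (2 * θ) := by
    rw [cos_two_mul]
    linear_combination lam * sin_sq_add_cos_sq θ
  have hlam' : lam - 1 / 2 = -(1 / 2 - lam) := by ring
  rw [tq_eq_symPowSum, tq_eq_symPowSum, hμ, hlam', symPowSum_neg, ← symPowSum_zero,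
    pow_add_one_sub_pow_eq_symPowSum, sin_sq, ← sub_nonneg]
  set a := 1 / 2 - lam
  set c := cos (2 * θ)
  have key := mul_symPowSum_mul_sub_le hq hq23 (s := a) (c := c)
    (abs_le.2 ⟨by linarith [hlam.2], by linarith [hlam.1]⟩) (abs_cos_le_one _)
  refine (div_nonneg_of_mul_nonneg (b := q - 1)
    (a := c ^ 2 * (symPowSum q a - symPowSum q 0) - (symPowSum q (a * c) - symPowSum q 0))
    (by linear_combination key)).trans_eq ?_
  ring

lemma one_sub_tq {q : ℝ} (hq : q ≠ 1) (x : ℝ) :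
    1 - tq q x = (x ^ q + (1 - x) ^ q + q - 2) / (q - 1) := by
  rw [tq, eq_div_iff (sub_ne_zero.2 hq), sub_mul, div_mul_cancel₀ _ (sub_ne_zero.2 hq)]
  ring

theorem tsallis_state_dependent_bound_general
    (q : ℝ) (hq : q ∈ Set.Icc (0:ℝ) 2 ∪ Set.Ici (3:ℝ)) (hq1 : q ≠ 1)
    (lam : ℝ) (hlam : lam ∈ Set.Icc (0:ℝ) 1)
    (ε : ℝ)
    (θ : ℝ) :
    tq q (lam * Real.sin θ ^ 2 + (1 - lam) * Real.cos θ ^ 2)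
      + tq q (lam * Real.sin (θ + ε) ^ 2 + (1 - lam) * Real.cos (θ + ε) ^ 2)
      - 2 * tq q lam ≥
      ((lam ^ q + (1 - lam) ^ q - 2 ^ (1 - q)) / (lam ^ q + (1 - lam) ^ q + q - 2))
        * (1 - tq q lam)
        * (Real.sin (2*θ + 2*ε) ^ 2 + Real.sin (2*θ) ^ 2) := by
  have hq₀ : 0 ≤ q := by
    rcases hq with h | h
    exacts [h.1, zero_le_three.trans h]
  have hq23 : 0 ≤ (q - 2) * (q - 3) := by
    rcases hq with ⟨-, h⟩ | h
    exacts [mul_nonneg_of_nonpos_of_nonpos (by linarith) (by linarith),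
      mul_nonneg (by linarith [mem_Ici.1 h]) (sub_nonneg.2 h)]
  set M := (lam ^ q + (1 - lam) ^ q - 2 ^ (1 - q)) / (q - 1) with hM_def
  have hM : 0 ≤ M := by
    rw [hM_def, pow_add_one_sub_pow_eq_symPowSum, ← symPowSum_zero]
    exact div_nonneg_of_mul_nonneg (mul_symPowSum_sub_zero_nonneg hq₀
      (abs_le.2 ⟨by linarith [hlam.2], by linarith [hlam.1]⟩))
  have hcoef : (lam ^ q + (1 - lam) ^ q - 2 ^ (1 - q)) / (lam ^ q + (1 - lam) ^ q + q - 2)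
      * (1 - tq q lam) ≤ M := by
    rw [one_sub_tq hq1]
    rcases eq_or_ne (lam ^ q + (1 - lam) ^ q + q - 2) 0 with hD | hD
    · rwa [hD, div_zero, zero_mul]
    · rw [div_mul_div_cancel₀ hD]
  have h₁ := div_mul_sin_sq_le_tq_sub_tq hq₀ hq23 hlam θ
  have h₂ := div_mul_sin_sq_le_tq_sub_tq hq₀ hq23 hlam (θ + ε)
  rw [show 2 * θ + 2 * ε = 2 * (θ + ε) by ring, ge_iff_le]
  calc _ ≤ M * (sin (2 * (θ + ε)) ^ 2 + sin (2 * θ) ^ 2) :=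
        mul_le_mul_of_nonneg_right hcoef (by positivity)
    _ ≤ _ := by linarith

theorem tsallis_state_dependent_bound
    (q : ℝ) (hq : q ∈ Set.Icc (0:ℝ) 2 ∪ Set.Ici (3:ℝ)) (hq1 : q ≠ 1)
    (lam : ℝ) (hlam : lam ∈ Set.Icc (0:ℝ) 1)
    (ε : ℝ) (hε : ε ∈ Set.Icc (0:ℝ) (π/2))
    (θ : ℝ) :
    tq q (lam * Real.sin θ ^ 2 + (1 - lam) * Real.cos θ ^ 2)
      + tq q (lam * Real.sin (θ + ε) ^ 2 + (1 - lam) * Real.cos (θ + ε) ^ 2)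
      - 2 * tq q lam ≥
      ((lam ^ q + (1 - lam) ^ q - 2 ^ (1 - q)) / (lam ^ q + (1 - lam) ^ q + q - 2))
        * (1 - tq q lam)
        * (Real.sin (2*θ + 2*ε) ^ 2 + Real.sin (2*θ) ^ 2) :=
  tsallis_state_dependent_bound_general q hq hq1 lam hlam ε θ
end

section
/- Let λ ∈ [0,1], ε ∈ [0, π/2], θ ∈ ℝ, and let c = cos ε if ε ≤ π/4 and c = sin ε if ε > π/4. Set μ_X(θ) = λ sin²θ + (1-λ)cos²θ and μ_Y(θ) = λ sin²(θ+ε) + (1-λ)cos²(θ+ε). Then h(μ_X(θ)) + h(μ_Y(θ)) - 2h(λ) ≥ 2 (ln 2 - h(λ)) (1 - c²), where h is the binary entropy in natural logarithm. (This is the Shannon/von Neumann q → 1 case of the main uncertainty relation, the bound B_KPP.) -/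
open Real

/-- Binary entropy `h(x) = -x ln x - (1-x) ln(1-x)` (natural logarithm). -/
noncomputable def binEnt (x : ℝ) : ℝ := -(x * Real.log x) - (1 - x) * Real.log (1 - x)

/-!
Write `D(y) = log 2 - h((1 - y) / 2)` for the entropy deficit of a qubit with Bloch vector of
length `|y|`. Then `h(λ) = log 2 - D(1 - 2λ)` and `1 - 2 μ_X(θ) = -cos 2θ · (1 - 2λ)`: the
measurement shrinks the Bloch vector by the factor `cos 2θ`. In the power series
`D(y) = ∑ y^(2k+2) / ((2k+1)(2k+2))` all coefficients are nonnegative and the `k`-th term scales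
by `(t²)^(k+1) ≤ t²` under `y ↦ t y`, so `D(t y) ≤ t² D(y)` for `|t| ≤ 1`. The theorem follows
from `cos² 2θ + cos² (2θ + 2ε) ≤ 1 + |cos 2ε| = 2 c²`.
-/

open Set

lemma binEnt_eq_binEntropy : binEnt = binEntropy := by
  funext p
  simp only [binEnt, binEntropy, log_inv]
  ring

lemma binEnt_le_log_two (p : ℝ) : binEnt p ≤ log 2 :=
  binEnt_eq_binEntropy ▸ binEntropy_le_log_two

noncomputable def entropyDeficit (y : ℝ) : ℝ := log 2 - binEntropy ((1 - y) / 2)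

@[fun_prop]
lemma continuous_entropyDeficit : Continuous entropyDeficit := by
  unfold entropyDeficit
  fun_prop

lemma binEnt_eq_log_two_sub_entropyDeficit (p : ℝ) :
    binEnt p = log 2 - entropyDeficit (1 - 2 * p) := by
  rw [entropyDeficit, binEnt_eq_binEntropy, sub_sub_cancel]
  congr 1
  ring

lemma entropyDeficit_eq_of_abs_lt_one {y : ℝ} (hy : |y| < 1) :
    entropyDeficit y = ((1 + y) * log (1 + y) + (1 - y) * log (1 - y)) / 2 := by
  obtain ⟨hy₁, hy₂⟩ := abs_lt.mp hy
  have h₁ : log ((1 - y) / 2) = log (1 - y) - log 2 := log_div (by linarith) two_ne_zero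
  have h₂ : log ((1 + y) / 2) = log (1 + y) - log 2 := log_div (by linarith) two_ne_zero
  rw [entropyDeficit, binEntropy, show 1 - (1 - y) / 2 = (1 + y) / 2 by ring, log_inv, log_inv,
    h₁, h₂]
  ring

lemma hasSum_entropyDeficit {y : ℝ} (hy : |y| < 1) :
    HasSum (fun k : ℕ => y ^ (2 * k + 2) / ((2 * k + 1) * (2 * k + 2))) (entropyDeficit y) := by
  have hy₂ : |y ^ 2| < 1 := by
    rw [abs_pow, sq_lt_one_iff₀ (abs_nonneg y)]
    exact hy
  have hodd := (hasSum_log_sub_log_of_abs_lt_one hy).mul_left (y / 2)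
  have heven := (hasSum_pow_div_log_of_abs_lt_one hy₂).div_const 2
  have hvalue : y / 2 * (log (1 + y) - log (1 - y)) - -log (1 - y ^ 2) / 2 = entropyDeficit y := by
    obtain ⟨hy₁, hy₂⟩ := abs_lt.mp hy
    rw [entropyDeficit_eq_of_abs_lt_one hy, show 1 - y ^ 2 = (1 + y) * (1 - y) by ring,
      log_mul (by linarith) (by linarith)]
    ring
  refine hvalue ▸ (hodd.sub heven).congr_fun fun k => ?_
  field_simp
  ring

lemma entropyDeficit_mul_le_of_abs_lt_one {t y : ℝ} (ht : |t| ≤ 1) (hy : |y| < 1) :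
    entropyDeficit (t * y) ≤ t ^ 2 * entropyDeficit y := by
  have hty : |t * y| < 1 := by
    rw [abs_mul]
    exact mul_lt_one_of_nonneg_of_lt_one_right ht (abs_nonneg y) hy
  refine hasSum_le (fun k => ?_) (hasSum_entropyDeficit hty)
    ((hasSum_entropyDeficit hy).mul_left (t ^ 2))
  have ht₂ : (t ^ 2) ^ (k + 1) ≤ t ^ 2 :=
    pow_le_of_le_one (sq_nonneg t) (sq_le_one_iff_abs_le_one t |>.mpr ht) k.succ_ne_zero
  rw [mul_div_assoc', show (t * y) ^ (2 * k + 2) = (t ^ 2) ^ (k + 1) * (y ^ 2) ^ (k + 1) by ring,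
    show y ^ (2 * k + 2) = (y ^ 2) ^ (k + 1) by ring]
  gcongr

lemma entropyDeficit_mul_le {t y : ℝ} (ht : |t| ≤ 1) (hy : |y| ≤ 1) :
    entropyDeficit (t * y) ≤ t ^ 2 * entropyDeficit y := by
  have hclosed : IsClosed {y | entropyDeficit (t * y) ≤ t ^ 2 * entropyDeficit y} :=
    isClosed_le (by fun_prop) (by fun_prop)
  have hIcc : Icc (-1 : ℝ) 1 ⊆ {y | entropyDeficit (t * y) ≤ t ^ 2 * entropyDeficit y} := by
    rw [← closure_Ioo (by norm_num)]
    exact closure_minimal (fun y hy => entropyDeficit_mul_le_of_abs_lt_one ht (abs_lt.mpr hy))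
      hclosed
  exact hIcc (abs_le.mp hy)

lemma one_sub_two_mul_mix (lam θ : ℝ) :
    1 - 2 * (lam * sin θ ^ 2 + (1 - lam) * cos θ ^ 2) = -cos (2 * θ) * (1 - 2 * lam) := by
  rw [cos_two_mul, sin_sq]
  ring

lemma log_two_sub_le_binEnt_mix {lam : ℝ} (hlam : lam ∈ Icc (0 : ℝ) 1) (θ : ℝ) :
    log 2 - cos (2 * θ) ^ 2 * (log 2 - binEnt lam)
      ≤ binEnt (lam * sin θ ^ 2 + (1 - lam) * cos θ ^ 2) := by
  have hy : |1 - 2 * lam| ≤ 1 := abs_le.mpr ⟨by linarith [hlam.2], by linarith [hlam.1]⟩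
  have ht : |-cos (2 * θ)| ≤ 1 := by rw [abs_neg]; exact abs_cos_le_one _
  have hmul := entropyDeficit_mul_le ht hy
  rw [neg_sq] at hmul
  rw [binEnt_eq_log_two_sub_entropyDeficit, binEnt_eq_log_two_sub_entropyDeficit,
    one_sub_two_mul_mix, sub_sub_cancel]
  linarith

lemma cos_sq_add_cos_add_sq_le (a b : ℝ) : cos a ^ 2 + cos (a + b) ^ 2 ≤ 1 + |cos b| := by
  have hsum : cos a ^ 2 + cos (a + b) ^ 2 = 1 + cos (2 * a + b) * cos b := by
    have h₁ : cos (2 * a + b) = cos a * cos (a + b) - sin a * sin (a + b) := by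
      rw [← cos_add]; ring_nf
    have h₂ : cos b = cos (a + b) * cos a + sin (a + b) * sin a := by
      rw [← cos_sub]; ring_nf
    rw [h₁, h₂]
    linear_combination sin (a + b) ^ 2 * sin_sq_add_cos_sq a
      + (1 - cos a ^ 2) * sin_sq_add_cos_sq (a + b)
  have hprod : cos (2 * a + b) * cos b ≤ |cos b| :=
    calc cos (2 * a + b) * cos b ≤ |cos (2 * a + b)| * |cos b| := by
          rw [← abs_mul]; exact le_abs_self _
      _ ≤ |cos b| := mul_le_of_le_one_left (abs_nonneg _) (abs_cos_le_one _)
  linarith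

lemma two_mul_sq_eq_one_add_abs_cos_two_mul {ε c : ℝ} (hε : ε ∈ Icc (0 : ℝ) (π / 2))
    (hc : c = if ε ≤ π / 4 then cos ε else sin ε) : 2 * c ^ 2 = 1 + |cos (2 * ε)| := by
  obtain ⟨hε₀, hε₁⟩ := hε
  split_ifs at hc with hle
  · have : 0 ≤ cos (2 * ε) := cos_nonneg_of_mem_Icc ⟨by linarith [pi_pos], by linarith⟩
    rw [abs_of_nonneg this, hc, cos_sq ε]
    ring
  · have : cos (2 * ε) ≤ 0 := cos_nonpos_of_pi_div_two_le_of_le (by linarith) (by linarith)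
    rw [abs_of_nonpos this, hc, cos_two_mul, sin_sq]
    ring

theorem shannon_conditional_uncertainty_BKPP
    (lam : ℝ) (hlam : lam ∈ Set.Icc (0:ℝ) 1)
    (ε : ℝ) (hε : ε ∈ Set.Icc (0:ℝ) (π/2))
    (θ : ℝ)
    (c : ℝ) (hc : c = if ε ≤ π/4 then Real.cos ε else Real.sin ε) :
    binEnt (lam * Real.sin θ ^ 2 + (1 - lam) * Real.cos θ ^ 2)
      + binEnt (lam * Real.sin (θ + ε) ^ 2 + (1 - lam) * Real.cos (θ + ε) ^ 2)
      - 2 * binEnt lam ≥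
      2 * (Real.log 2 - binEnt lam) * (1 - c ^ 2) := by
  have hX := log_two_sub_le_binEnt_mix hlam θ
  have hY := log_two_sub_le_binEnt_mix hlam (θ + ε)
  rw [mul_add] at hY
  have htrig := cos_sq_add_cos_add_sq_le (2 * θ) (2 * ε)
  have hc₂ := two_mul_sq_eq_one_add_abs_cos_two_mul hε hc
  have hdeficit : 0 ≤ log 2 - binEnt lam := sub_nonneg.mpr (binEnt_le_log_two lam)
  nlinarith [mul_le_mul_of_nonneg_right htrig hdeficit]
end

section
/- Let ε ∈ [0, π/2] and let c = cos ε if ε ≤ π/4 and c = sin ε if ε > π/4. Then for every θ ∈ ℝ, sin²(2θ + 2ε) + sin²(2θ) ≥ 2(1 - c²); moreover the value 2(1 - c²) is attained at θ = π/2 - ε/2 when ε ≤ π/4, and at θ = π/4 - ε/2 when ε > π/4. -/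
/-!
By `sin² a + sin² b = 1 - cos (a + b) cos (a - b)`, the sum equals `1 - cos (4θ + 2ε) cos 2ε`,
which is at least `1 - |cos 2ε|`, with equality when `cos (4θ + 2ε) = ± 1` has the sign of
`cos 2ε`. For `ε ∈ [0, π/2]` the bound `1 - |cos 2ε|` is `2 sin² ε` or `2 cos² ε` according as
`ε ≤ π/4` or not, i.e. `2 (1 - c²)`.
-/

open Real

theorem Real.sin_sq_add_sin_sq (a b : ℝ) :
    sin a ^ 2 + sin b ^ 2 = 1 - cos (a + b) * cos (a - b) := by
  rw [cos_add, cos_sub]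
  linear_combination (1 - sin b ^ 2) * sin_sq_add_cos_sq a + cos a ^ 2 * sin_sq_add_cos_sq b

theorem Real.one_sub_abs_cos_sub_le_sin_sq_add_sin_sq (a b : ℝ) :
    1 - |cos (a - b)| ≤ sin a ^ 2 + sin b ^ 2 := by
  have hprod : cos (a + b) * cos (a - b) ≤ |cos (a - b)| :=
    calc cos (a + b) * cos (a - b) ≤ |cos (a + b)| * |cos (a - b)| := by
          rw [← abs_mul]; exact le_abs_self _
      _ ≤ 1 * |cos (a - b)| := by gcongr; exact abs_cos_le_one _
      _ = |cos (a - b)| := one_mul _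
  rw [sin_sq_add_sin_sq]
  linarith

theorem Real.one_sub_abs_cos_two_mul_of_nonneg {x : ℝ} (h : 0 ≤ cos (2 * x)) :
    1 - |cos (2 * x)| = 2 * (1 - cos x ^ 2) := by
  rw [abs_of_nonneg h, cos_two_mul]
  ring

theorem Real.one_sub_abs_cos_two_mul_of_nonpos {x : ℝ} (h : cos (2 * x) ≤ 0) :
    1 - |cos (2 * x)| = 2 * (1 - sin x ^ 2) := by
  rw [abs_of_nonpos h, cos_two_mul, cos_sq']
  ring

theorem sin_sq_sum_min
    (ε : ℝ) (hε : ε ∈ Set.Icc (0:ℝ) (π/2))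
    (c : ℝ) (hc : c = if ε ≤ π/4 then Real.cos ε else Real.sin ε) :
    (∀ θ : ℝ, Real.sin (2*θ + 2*ε) ^ 2 + Real.sin (2*θ) ^ 2 ≥ 2 * (1 - c ^ 2)) ∧
    (ε ≤ π/4 →
      Real.sin (2*(π/2 - ε/2) + 2*ε) ^ 2 + Real.sin (2*(π/2 - ε/2)) ^ 2 = 2 * (1 - c ^ 2)) ∧
    (ε > π/4 →
      Real.sin (2*(π/4 - ε/2) + 2*ε) ^ 2 + Real.sin (2*(π/4 - ε/2)) ^ 2 = 2 * (1 - c ^ 2)) := by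
  obtain ⟨hε0, hε1⟩ := hε
  have hcos_nonneg (h : ε ≤ π/4) : 0 ≤ cos (2 * ε) :=
    cos_nonneg_of_mem_Icc ⟨by linarith [pi_pos], by linarith⟩
  have hcos_nonpos (h : π/4 < ε) : cos (2 * ε) ≤ 0 :=
    cos_nonpos_of_pi_div_two_le_of_le (by linarith) (by linarith)
  have hbound : 2 * (1 - c ^ 2) = 1 - |cos (2 * ε)| := by
    split_ifs at hc with h
    · rw [hc, one_sub_abs_cos_two_mul_of_nonneg (hcos_nonneg h)]
    · rw [hc, one_sub_abs_cos_two_mul_of_nonpos (hcos_nonpos (not_le.mp h))]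
  rw [hbound]
  refine ⟨fun θ => ?_, fun h => ?_, fun h => ?_⟩
  · simpa using one_sub_abs_cos_sub_le_sin_sq_add_sin_sq (2*θ + 2*ε) (2*θ)
  · rw [sin_sq_add_sin_sq, abs_of_nonneg (hcos_nonneg h),
      show 2*(π/2 - ε/2) + 2*ε + 2*(π/2 - ε/2) = 2 * π by ring, cos_two_pi, add_sub_cancel_left]
    ring
  · rw [sin_sq_add_sin_sq, abs_of_nonpos (hcos_nonpos h),
      show 2*(π/4 - ε/2) + 2*ε + 2*(π/4 - ε/2) = π by ring, cos_pi, add_sub_cancel_left]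
    ring
end
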